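/- Determinism: the combined small-step relation ⇒ = ⇀ ∪ →read ∪ →store ∪ →merge is deterministic on well-formed configurations: if (C, h, e) is well-formed, (C, h, e) ⇒ (C1, h1, e1) and (C, h, e) ⇒ (C2, h2, e2), then (C1, h1, e1) = (C2, h2, e2). -/

import Mathlib

namespace Memo

/-! ### Terms over a program signature -/

/-- Terms over operation symbols `Op`, constructors `Con` and variables `V`. -/
inductive Tm (Op Con V : Type) : Type
  | var : V → Tm Op Con V
  | op  : Op → List (Tm Op Con V) → Tm Op Con V
  | con : Con → List (Tm Op Con V) → Tm Op Con V

namespace Tm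
variable {Op Con V : Type}

/-- Substitution. -/
def subst (σ : V → Tm Op Con V) : Tm Op Con V → Tm Op Con V
  | .var x => σ x
  | .op f ts => .op f (ts.attach.map fun t => subst σ t.1)
  | .con c ts => .con c (ts.attach.map fun t => subst σ t.1)
decreasing_by
  all_goals simp_wf
  all_goals (have := List.sizeOf_lt_of_mem t.2; omega)

/-- The size `|t|` of a term (number of symbols). -/
def size : Tm Op Con V → ℕ
  | .var _ => 1
  | .op _ ts => 1 + (ts.attach.map fun t => size t.1).sum
  | .con _ ts => 1 + (ts.attach.map fun t => size t.1).sum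
decreasing_by
  all_goals simp_wf
  all_goals (have := List.sizeOf_lt_of_mem t.2; omega)

/-- Number of occurrences of the variable `x` in a term. -/
def varCount [DecidableEq V] (x : V) : Tm Op Con V → ℕ
  | .var y => if y = x then 1 else 0
  | .op _ ts => (ts.attach.map fun t => varCount x t.1).sum
  | .con _ ts => (ts.attach.map fun t => varCount x t.1).sum
decreasing_by
  all_goals simp_wf
  all_goals (have := List.sizeOf_lt_of_mem t.2; omega)

end Tm

/-- Values: ground constructor terms. -/
inductive IsValue {Op Con V : Type} : Tm Op Con V → Prop
  | con {c : Con} {ts} : (∀ t ∈ ts, IsValue t) → IsValue (.con c ts)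

/-- Ground terms: terms without variables. -/
inductive Ground {Op Con V : Type} : Tm Op Con V → Prop
  | op {f : Op} {ts} : (∀ t ∈ ts, Ground t) → Ground (.op f ts)
  | con {c : Con} {ts} : (∀ t ∈ ts, Ground t) → Ground (.con c ts)

/-- Patterns: terms built from constructors and variables only. -/
inductive IsPattern {Op Con V : Type} : Tm Op Con V → Prop
  | var (x : V) : IsPattern (.var x)
  | con {c : Con} {ts} : (∀ t ∈ ts, IsPattern t) → IsPattern (.con c ts)

/-- The variable `x` occurs in the given term. -/
inductive VarIn {Op Con V : Type} (x : V) : Tm Op Con V → Prop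
  | var : VarIn x (.var x)
  | op {f : Op} {ts t} : t ∈ ts → VarIn x t → VarIn x (.op f ts)
  | con {c : Con} {ts t} : t ∈ ts → VarIn x t → VarIn x (.con c ts)

/-! ### Programs -/

/-- A rewrite rule `f(p₁,…,pₖ) → r`. -/
structure Rule (Op Con V : Type) where
  lhsOp : Op
  lhsArgs : List (Tm Op Con V)
  rhs : Tm Op Con V

/-- A program: a finite set (list) of rewrite rules. -/
structure Prog (Op Con V : Type) where
  rules : List (Rule Op Con V)

/-- Well-formed rule: left-hand side arguments are patterns and all variables of the
right-hand side occur in the left-hand side. -/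
def WFRule {Op Con V : Type} (r : Rule Op Con V) : Prop :=
  (∀ p ∈ r.lhsArgs, IsPattern p) ∧
  (∀ x, VarIn x r.rhs → ∃ p ∈ r.lhsArgs, VarIn x p)

/-- Left-linearity: every variable occurs at most once in the left-hand side. -/
def LeftLinear {Op Con V : Type} [DecidableEq V] (r : Rule Op Con V) : Prop :=
  ∀ x : V, (r.lhsArgs.map (Tm.varCount x)).sum ≤ 1

/-- Non-ambiguity: no two rules have overlapping left-hand sides. -/
def NonAmbiguous {Op Con V : Type} (P : Prog Op Con V) : Prop :=
  ∀ r1 ∈ P.rules, ∀ r2 ∈ P.rules, r1.lhsOp = r2.lhsOp →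
    ∀ σ1 σ2 : V → Tm Op Con V,
      r1.lhsArgs.map (Tm.subst σ1) = r2.lhsArgs.map (Tm.subst σ2) → r1 = r2

/-- Orthogonal program: well-formed, left-linear and non-ambiguous. -/
def Orthogonal {Op Con V : Type} [DecidableEq V] (P : Prog Op Con V) : Prop :=
  (∀ r ∈ P.rules, WFRule r ∧ LeftLinear r) ∧ NonAmbiguous P

/-! ### Standard call-by-value big-step semantics (Figure 3) -/

mutual
/-- `Eval P t v`: the term `t` reduces to the value `v`. -/
inductive Eval {Op Con V : Type} (P : Prog Op Con V) : Tm Op Con V → Tm Op Con V → Prop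
  | con {c : Con} {ts vs} : EvalList P ts vs → Eval P (.con c ts) (.con c vs)
  | split {f : Op} {ts vs v} : EvalList P ts vs → Eval P (.op f vs) v →
      Eval P (.op f ts) v
  | apply {f : Op} {vs r σ v} : (∀ u ∈ vs, IsValue u) → r ∈ P.rules → r.lhsOp = f →
      vs = r.lhsArgs.map (Tm.subst σ) → Eval P (Tm.subst σ r.rhs) v →
      Eval P (.op f vs) v

/-- Left-to-right evaluation of a list of terms. -/
inductive EvalList {Op Con V : Type} (P : Prog Op Con V) :
    List (Tm Op Con V) → List (Tm Op Con V) → Prop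
  | nil : EvalList P [] []
  | cons {t v ts vs} : Eval P t v → EvalList P ts vs → EvalList P (t :: ts) (v :: vs)
end

/-! ### Cost-annotated big-step semantics with memoization (Figure 4) -/

/-- A cache: a set of pairs of a function call on values and its result value. -/
abbrev TCache (Op Con V : Type) := Set (Op × List (Tm Op Con V) × Tm Op Con V)

mutual
/-- `MEval P C₀ t m C₁ v`: starting with cache `C₀` the term `t` reduces to the value `v`
with updated cache `C₁` at cost `m` (number of non-tabulated function applications). -/
inductive MEval {Op Con V : Type} (P : Prog Op Con V) :
    TCache Op Con V → Tm Op Con V → ℕ → TCache Op Con V → Tm Op Con V → Prop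
  | con {C0 C1 : TCache Op Con V} {c : Con} {ts m vs} :
      MEvalList P C0 ts m C1 vs →
      MEval P C0 (.con c ts) m C1 (.con c vs)
  | split {C0 C1 C2 : TCache Op Con V} {f : Op} {ts m vs n v} :
      MEvalList P C0 ts m C1 vs →
      MEval P C1 (.op f vs) n C2 v →
      MEval P C0 (.op f ts) (n + m) C2 v
  | read {C : TCache Op Con V} {f : Op} {vs v} :
      (∀ u ∈ vs, IsValue u) → (f, vs, v) ∈ C →
      MEval P C (.op f vs) 0 C v
  | update {C C' : TCache Op Con V} {f : Op} {vs r σ m v} :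
      (∀ u ∈ vs, IsValue u) → (∀ u, (f, vs, u) ∉ C) →
      r ∈ P.rules → r.lhsOp = f → vs = r.lhsArgs.map (Tm.subst σ) →
      MEval P C (Tm.subst σ r.rhs) m C' v →
      MEval P C (.op f vs) (m + 1) (insert (f, vs, v) C') v

/-- Left-to-right evaluation of a list of terms, threading the cache and summing costs. -/
inductive MEvalList {Op Con V : Type} (P : Prog Op Con V) :
    TCache Op Con V → List (Tm Op Con V) → ℕ → TCache Op Con V → List (Tm Op Con V) → Prop
  | nil {C : TCache Op Con V} : MEvalList P C [] 0 C []
  | cons {C0 C1 C2 : TCache Op Con V} {t m v ts n vs} :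
      MEval P C0 t m C1 v → MEvalList P C1 ts n C2 vs →
      MEvalList P C0 (t :: ts) (m + n) C2 (v :: vs)
end

/-! ### Heaps -/

/-- Locations. -/
abbrev Loc := ℕ

/-- A heap: a (partial) map from locations to constructors applied to locations,
i.e. a term graph over the constructors whose nodes are locations. -/
abbrev Heap (Con : Type) := Loc → Option (Con × List Loc)

/-- Domain (set of nodes) of a heap. -/
def heapDom {Con : Type} (h : Heap Con) : Set Loc := {l | h l ≠ none}

/-- A heap is maximally shared if equally labeled locations coincide. -/
def MaxShared {Con : Type} (h : Heap Con) : Prop :=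
  ∀ l1 l2 c ls, h l1 = some (c, ls) → h l2 = some (c, ls) → l1 = l2

/-- All successors of heap nodes are again heap nodes. -/
def HeapClosed {Con : Type} (h : Heap Con) : Prop :=
  ∀ l c ls, h l = some (c, ls) → ∀ l' ∈ ls, l' ∈ heapDom h

/-- `HUnfolds h l v`: the value `v` is stored at location `l`, i.e. `v = [l]_h` is
obtained by unfolding the heap `h` starting from location `l`. -/
inductive HUnfolds {Op Con V : Type} (h : Heap Con) : Loc → Tm Op Con V → Prop
  | mk {l : Loc} {c ls ts} : h l = some (c, ls) → ls.length = ts.length →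
      (∀ (i : ℕ) l' t, ls[i]? = some l' → ts[i]? = some t → HUnfolds h l' t) →
      HUnfolds h l (.con c ts)

/-- `merge(h, c(ℓ⃗)) = (h', ℓ)`: extension of the heap `h` by `c(ℓ⃗)` retaining maximal
sharing; an existing location is reused if possible, otherwise the first fresh location
is used. -/
inductive Merge {Con : Type} (h : Heap Con) (c : Con) (ls : List Loc) : Heap Con → Loc → Prop
  | reuse {l : Loc} : h l = some (c, ls) → Merge h c ls h l
  | fresh {l : Loc} : (∀ l', h l' ≠ some (c, ls)) → h l = none →
      (∀ l' < l, h l' ≠ none) →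
      Merge h c ls (Function.update h l (some (c, ls))) l

/-! ### Expressions, evaluation contexts and configurations -/

/-- Expressions: terms extended with locations and markers `f⟨ℓ⃗⟩{e}`. -/
inductive Expr (Op Con : Type) : Type
  | loc : Loc → Expr Op Con
  | op : Op → List (Expr Op Con) → Expr Op Con
  | con : Con → List (Expr Op Con) → Expr Op Con
  | marked : Op → List Loc → Expr Op Con → Expr Op Con

/-- Value expressions: built from constructors and locations only. -/
inductive IsValExpr {Op Con : Type} : Expr Op Con → Prop
  | loc (l : Loc) : IsValExpr (.loc l)
  | con {c : Con} {es} : (∀ e ∈ es, IsValExpr e) → IsValExpr (.con c es)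

/-- Evaluation contexts: a unique hole, with only locations to the left of the hole. -/
inductive Ctx (Op Con : Type) : Type
  | hole : Ctx Op Con
  | marked : Op → List Loc → Ctx Op Con → Ctx Op Con
  | op : Op → List Loc → Ctx Op Con → List (Expr Op Con) → Ctx Op Con
  | con : Con → List Loc → Ctx Op Con → List (Expr Op Con) → Ctx Op Con

/-- Plugging an expression into the hole of an evaluation context. -/
def Ctx.plug {Op Con : Type} : Ctx Op Con → Expr Op Con → Expr Op Con
  | .hole, e => e
  | .marked f ls E, e => .marked f ls (E.plug e)
  | .op f ls E es, e => .op f (ls.map Expr.loc ++ E.plug e :: es)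
  | .con c ls E es, e => .con c (ls.map Expr.loc ++ E.plug e :: es)

/-- A cache over locations. -/
abbrev HCache (Op : Type) := Set (Op × List Loc × Loc)

/-- Configurations: a cache, a heap and an expression. -/
abbrev Config (Op Con : Type) := HCache Op × Heap Con × Expr Op Con

/-- Instantiation of a term by a substitution mapping variables to locations,
yielding an expression. -/
def instE {Op Con V : Type} (σ : V → Loc) : Tm Op Con V → Expr Op Con
  | .var x => .loc (σ x)
  | .op f ts => .op f (ts.attach.map fun t => instE σ t.1)
  | .con c ts => .con c (ts.attach.map fun t => instE σ t.1)
decreasing_by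
  all_goals simp_wf
  all_goals (have := List.sizeOf_lt_of_mem t.2; omega)

/-- `PMatch h σ p l`: the pattern `p` matches the value stored at location `l` of the
heap `h`, binding the variables of `p` to locations according to `σ`.  This captures
matching via a homomorphism from the canonical tree of `p` into the heap, `σ` being the
induced substitution. -/
inductive PMatch {Op Con V : Type} (h : Heap Con) (σ : V → Loc) : Tm Op Con V → Loc → Prop
  | var {x l} : σ x = l → PMatch h σ (.var x) l
  | con {c : Con} {ps l ls} : h l = some (c, ls) → ps.length = ls.length →
      (∀ (i : ℕ) p l', ps[i]? = some p → ls[i]? = some l' → PMatch h σ p l') →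
      PMatch h σ (.con c ps) l

/-! ### Small-step semantics with memoization and sharing (Figure 6) -/

/-- The (apply) step. -/
inductive ApplyStep {Op Con V : Type} (P : Prog Op Con V) : Config Op Con → Config Op Con → Prop
  | mk {C : HCache Op} {h : Heap Con} {E : Ctx Op Con} {f ls r σ} :
      (∀ l, (f, ls, l) ∉ C) →
      r ∈ P.rules → r.lhsOp = f →
      r.lhsArgs.length = ls.length →
      (∀ (i : ℕ) p l, r.lhsArgs[i]? = some p → ls[i]? = some l → PMatch h σ p l) →
      ApplyStep P (C, h, E.plug (.op f (ls.map Expr.loc)))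
        (C, h, E.plug (.marked f ls (instE σ r.rhs)))

/-- The (read) step. -/
inductive ReadStep {Op Con : Type} : Config Op Con → Config Op Con → Prop
  | mk {C : HCache Op} {h : Heap Con} {E : Ctx Op Con} {f ls l} :
      (f, ls, l) ∈ C →
      ReadStep (C, h, E.plug (.op f (ls.map Expr.loc))) (C, h, E.plug (.loc l))

/-- The (store) step. -/
inductive StoreStep {Op Con : Type} : Config Op Con → Config Op Con → Prop
  | mk {C : HCache Op} {h : Heap Con} {E : Ctx Op Con} {f ls l} :
      StoreStep (C, h, E.plug (.marked f ls (.loc l)))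
        (insert (f, ls, l) C, h, E.plug (.loc l))

/-- The (merge) step. -/
inductive MergeStep {Op Con : Type} : Config Op Con → Config Op Con → Prop
  | mk {C : HCache Op} {h h' : Heap Con} {E : Ctx Op Con} {c ls l} :
      Merge h c ls h' l →
      MergeStep (C, h, E.plug (.con c (ls.map Expr.loc))) (C, h', E.plug (.loc l))

/-- `→sm`: read, store or merge. -/
def SmStep {Op Con : Type} : Config Op Con → Config Op Con → Prop :=
  fun a b => ReadStep a b ∨ StoreStep a b ∨ MergeStep a b

/-- `⇒`: apply, read, store or merge. -/
def Step {Op Con V : Type} (P : Prog Op Con V) : Config Op Con → Config Op Con → Prop :=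
  fun a b => ApplyStep P a b ∨ SmStep a b

/-- n-fold composition of `⇒`. -/
def StepN {Op Con V : Type} (P : Prog Op Con V) : ℕ → Config Op Con → Config Op Con → Prop
  | 0 => fun a b => a = b
  | n + 1 => fun a c => ∃ b, Step P a b ∧ StepN P n b c

/-- `→sm*`. -/
def SmSteps {Op Con : Type} : Config Op Con → Config Op Con → Prop :=
  Relation.ReflTransGen SmStep

/-- `⇛ = →sm* · ⇀ · →sm*`. -/
def MacroStep {Op Con V : Type} (P : Prog Op Con V) : Config Op Con → Config Op Con → Prop :=
  fun a d => ∃ b c, SmSteps a b ∧ ApplyStep P b c ∧ SmSteps c d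

/-- `⇛^m`, the m-fold composition of `⇛`: a reduction containing exactly `m` apply steps. -/
def MacroStepN {Op Con V : Type} (P : Prog Op Con V) : ℕ → Config Op Con → Config Op Con → Prop
  | 0 => fun a b => a = b
  | n + 1 => fun a c => ∃ b, MacroStep P a b ∧ MacroStepN P n b c

/-! ### Well-formed configurations -/

/-- A marker `f⟨ℓ⃗⟩{·}` occurs somewhere in the given expression. -/
inductive MarkedIn {Op Con : Type} (f : Op) (ls : List Loc) : Expr Op Con → Prop
  | here {e} : MarkedIn f ls (.marked f ls e)
  | op {g es e} : e ∈ es → MarkedIn f ls e → MarkedIn f ls (.op g es)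
  | con {c es e} : e ∈ es → MarkedIn f ls e → MarkedIn f ls (.con c es)
  | marked {g ls' e} : MarkedIn f ls e → MarkedIn f ls (.marked g ls' e)

/-- The location `l` occurs in the given expression. -/
inductive LocInExpr {Op Con : Type} (l : Loc) : Expr Op Con → Prop
  | loc : LocInExpr l (.loc l)
  | op {f es e} : e ∈ es → LocInExpr l e → LocInExpr l (.op f es)
  | con {c es e} : e ∈ es → LocInExpr l e → LocInExpr l (.con c es)
  | markedArg {f ls e} : l ∈ ls → LocInExpr l (.marked f ls e)
  | markedBody {f ls e} : LocInExpr l e → LocInExpr l (.marked f ls e)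

/-- Well-formed configurations: the heap is a maximally shared term graph, the cache is a
function compatible with the expression, and there are no dangling locations. -/
def WF {Op Con : Type} (cfg : Config Op Con) : Prop :=
  MaxShared cfg.2.1 ∧ HeapClosed cfg.2.1 ∧
  (∀ f ls l1 l2, (f, ls, l1) ∈ cfg.1 → (f, ls, l2) ∈ cfg.1 → l1 = l2) ∧
  (∀ f ls, MarkedIn f ls cfg.2.2 → ∀ l, (f, ls, l) ∉ cfg.1) ∧
  (∀ f ls l, (f, ls, l) ∈ cfg.1 → l ∈ heapDom cfg.2.1 ∧ ∀ l' ∈ ls, l' ∈ heapDom cfg.2.1) ∧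
  (∀ l, LocInExpr l cfg.2.2 → l ∈ heapDom cfg.2.1)

/-! ### Unfolding of expressions and caches -/

/-- `EUnfolds h e t`: the term `t = [e]_h` is obtained from `e` by following pointers to
the heap and erasing markers. -/
inductive EUnfolds {Op Con V : Type} (h : Heap Con) : Expr Op Con → Tm Op Con V → Prop
  | loc {l t} : HUnfolds h l t → EUnfolds h (.loc l) t
  | op {f : Op} {es ts} : es.length = ts.length →
      (∀ (i : ℕ) e t, es[i]? = some e → ts[i]? = some t → EUnfolds h e t) →
      EUnfolds h (.op f es) (.op f ts)
  | con {c : Con} {es ts} : es.length = ts.length →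
      (∀ (i : ℕ) e t, es[i]? = some e → ts[i]? = some t → EUnfolds h e t) →
      EUnfolds h (.con c es) (.con c ts)
  | marked {f ls e t} : EUnfolds h e t → EUnfolds h (.marked f ls e) t

/-- `[C]_h`: the unfolding of a location cache into a term cache. -/
def cacheUnfold {Op Con : Type} (V : Type) (h : Heap Con) (C : HCache Op) :
    TCache Op Con V :=
  {x | ∃ ls l, (x.1, ls, l) ∈ C ∧ ls.length = x.2.1.length ∧
    (∀ (i : ℕ) l' t, ls[i]? = some l' → x.2.1[i]? = some t → HUnfolds h l' t) ∧
    HUnfolds h l x.2.2}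

/-- An initial configuration: empty cache, maximally shared heap without dangling
locations, and an expression `f(v₁,…,vₖ)` whose arguments are value expressions. -/
def InitialConf {Op Con : Type} (h : Heap Con) (e : Expr Op Con) : Prop :=
  MaxShared h ∧ HeapClosed h ∧ (∀ l, LocInExpr l e → l ∈ heapDom h) ∧
  ∃ (f : Op) (es : List (Expr Op Con)), e = .op f es ∧ ∀ e' ∈ es, IsValExpr e'

/-! ### Sizes and weights -/

/-- The size `|e|` of an expression: every symbol and location counts one. -/
def exprSize {Op Con : Type} : Expr Op Con → ℕ
  | .loc _ => 1
  | .op _ es => 1 + (es.attach.map fun e => exprSize e.1).sum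
  | .con _ es => 1 + (es.attach.map fun e => exprSize e.1).sum
  | .marked _ _ e => 1 + exprSize e
decreasing_by
  all_goals simp_wf
  all_goals (have := List.sizeOf_lt_of_mem e.2; omega)

/-- The weight `‖e‖` of an expression: like the size, but locations count zero. -/
def weight {Op Con : Type} : Expr Op Con → ℕ
  | .loc _ => 0
  | .op _ es => 1 + (es.attach.map fun e => weight e.1).sum
  | .con _ es => 1 + (es.attach.map fun e => weight e.1).sum
  | .marked _ _ e => 1 + weight e
decreasing_by
  all_goals simp_wf
  all_goals (have := List.sizeOf_lt_of_mem e.2; omega)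

/-- `Δ`, the maximal size of a right-hand side of the program. -/
def progDelta {Op Con V : Type} (P : Prog Op Con V) : ℕ :=
  (P.rules.map fun r => r.rhs.size).foldr max 1

/-- The size of a configuration: cardinality of the cache plus number of heap nodes plus
size of the expression. -/
noncomputable def confSize {Op Con : Type} (cfg : Config Op Con) : ℕ :=
  cfg.1.ncard + (heapDom cfg.2.1).ncard + exprSize cfg.2.2

open Classical in
/-- The number of apply steps along a list of configurations. -/
noncomputable def applyCount {Op Con V : Type} (P : Prog Op Con V) :
    List (Config Op Con) → ℕ
  | [] => 0
  | [_] => 0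
  | a :: b :: rest => (if ApplyStep P a b then 1 else 0) + applyCount P (b :: rest)

end Memo

/-!
A step contracts a redex in an evaluation context. Since everything to the left of a hole is a
location and the immediate subexpressions of a redex are locations, an expression decomposes in
at most one way into a context and a redex, so two steps from the same configuration contract
the same redex. Each redex has at most one contractum: a call `f(ℓ⃗)` is read if it is
tabulated, with a unique result because the cache is a function, and applied otherwise, where
orthogonality leaves at most one matching rule and the match is unique on its variables; a
marker around a location can only be stored; and `merge` on a maximally shared heap either
reuses the unique node with the given label or takes the least fresh location.
-/

namespace List

variable {α β : Type*}

theorem eq_of_append_cons_eq_append_cons {x₁ x₂ z₁ z₂ : List α} {a₁ a₂ : α}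
    (h₁ : a₁ ∉ x₂) (h₂ : a₂ ∉ x₁) (h : x₁ ++ a₁ :: z₁ = x₂ ++ a₂ :: z₂) :
    x₁ = x₂ ∧ a₁ = a₂ ∧ z₁ = z₂ := by
  simp only [append_eq_append_iff, cons_eq_append_iff, cons_eq_cons] at h
  rcases h with ⟨c, rfl, ⟨rfl, rfl, rfl⟩ | ⟨d, rfl, rfl⟩⟩ |
    ⟨c, rfl, ⟨rfl, rfl, rfl⟩ | ⟨d, rfl, rfl⟩⟩ <;> simp_all

theorem forall₂_of_length_eq_of_getElem? {R : α → β → Prop} {l₁ : List α} {l₂ : List β}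
    (hlen : l₁.length = l₂.length)
    (h : ∀ (i : ℕ) a b, l₁[i]? = some a → l₂[i]? = some b → R a b) : Forall₂ R l₁ l₂ :=
  forall₂_iff_get.2 ⟨hlen, fun i h₁ h₂ => h i _ _ (by simp) (by simp)⟩

theorem Forall₂.exists_of_mem_left {R S : α → β → Prop} :
    ∀ {l₁ : List α} {l₂ : List β}, Forall₂ R l₁ l₂ → Forall₂ S l₁ l₂ →
      ∀ {a}, a ∈ l₁ → ∃ b, R a b ∧ S a b
  | _, _, .cons hr _, .cons hs _, _, .head _ => ⟨_, hr, hs⟩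
  | _, _, .cons _ hrs, .cons _ hss, _, .tail _ ha => hrs.exists_of_mem_left hss ha

end List

namespace Memo

variable {Op Con V : Type}

namespace Tm

@[simp] lemma subst_var (σ : V → Tm Op Con V) (x : V) : subst σ (.var x) = σ x :=
  subst.eq_1 σ x

@[simp] lemma subst_op (σ : V → Tm Op Con V) (f : Op) (ts : List (Tm Op Con V)) :
    subst σ (.op f ts) = .op f (ts.map (subst σ)) := by
  rw [subst]; simp

@[simp] lemma subst_con (σ : V → Tm Op Con V) (c : Con) (ts : List (Tm Op Con V)) :
    subst σ (.con c ts) = .con c (ts.map (subst σ)) := by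
  rw [subst]; simp

@[simp] lemma varCount_op [DecidableEq V] (x : V) (f : Op) (ts : List (Tm Op Con V)) :
    varCount x (.op f ts) = (ts.map (varCount x)).sum := by
  rw [varCount]; simp

@[simp] lemma varCount_con [DecidableEq V] (x : V) (c : Con) (ts : List (Tm Op Con V)) :
    varCount x (.con c ts) = (ts.map (varCount x)).sum := by
  rw [varCount]; simp

theorem subst_congr {s s' : V → Tm Op Con V} :
    ∀ t : Tm Op Con V, (∀ x, VarIn x t → s x = s' x) → subst s t = subst s' t
  | .var x, h => by simpa using h x .var
  | .op f ts, h => by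
    simp only [subst_op, Tm.op.injEq, true_and]
    exact List.map_congr_left fun u hu => subst_congr u fun x hx => h x (.op hu hx)
  | .con c ts, h => by
    simp only [subst_con, Tm.con.injEq, true_and]
    exact List.map_congr_left fun u hu => subst_congr u fun x hx => h x (.con hu hx)

end Tm

theorem VarIn.varCount_pos [DecidableEq V] {x : V} {t : Tm Op Con V} (h : VarIn x t) :
    0 < t.varCount x := by
  induction h with
  | var => simp [Tm.varCount]
  | op hmem _ ih | con hmem _ ih =>
    simpa using lt_of_lt_of_le ih (List.le_sum_of_mem (List.mem_map_of_mem hmem))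

@[simp] lemma instE_var (σ : V → Loc) (x : V) :
    instE (Op := Op) (Con := Con) σ (.var x) = .loc (σ x) :=
  instE.eq_1 σ x

@[simp] lemma instE_op (σ : V → Loc) (f : Op) (ts : List (Tm Op Con V)) :
    instE σ (.op f ts) = .op f (ts.map (instE σ)) := by
  rw [instE]; simp

@[simp] lemma instE_con (σ : V → Loc) (c : Con) (ts : List (Tm Op Con V)) :
    instE σ (.con c ts) = .con c (ts.map (instE σ)) := by
  rw [instE]; simp

theorem instE_congr {s s' : V → Loc} :
    ∀ t : Tm Op Con V, (∀ x, VarIn x t → s x = s' x) → instE s t = instE s' t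
  | .var x, h => by simpa using h x .var
  | .op f ts, h => by
    simp only [instE_op, Expr.op.injEq, true_and]
    exact List.map_congr_left fun u hu => instE_congr u fun x hx => h x (.op hu hx)
  | .con c ts, h => by
    simp only [instE_con, Expr.con.injEq, true_and]
    exact List.map_congr_left fun u hu => instE_congr u fun x hx => h x (.con hu hx)

/-- `LeftLinear r` unfolds to `Linear r.lhsArgs`. -/
def Linear [DecidableEq V] (ts : List (Tm Op Con V)) : Prop :=
  ∀ x, (ts.map (Tm.varCount x)).sum ≤ 1

namespace Linear
variable [DecidableEq V] {p : Tm Op Con V} {ps : List (Tm Op Con V)}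

theorem tail (h : Linear (p :: ps)) : Linear ps :=
  fun x => by have := h x; simp only [List.map_cons, List.sum_cons] at this; omega

theorem of_con {c : Con} {qs : List (Tm Op Con V)} (h : Linear (.con c qs :: ps)) : Linear qs :=
  fun x => by
    have := h x
    simp only [List.map_cons, List.sum_cons, Tm.varCount_con] at this
    omega

theorem not_varIn_of_mem (h : Linear (p :: ps)) {x : V} (hx : VarIn x p) {u : Tm Op Con V}
    (hu : u ∈ ps) : ¬ VarIn x u := fun hxu => by
  have := h x
  have := hx.varCount_pos
  have := lt_of_lt_of_le hxu.varCount_pos (List.le_sum_of_mem (List.mem_map_of_mem hu))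
  simp only [List.map_cons, List.sum_cons] at *
  omega

open Classical in
theorem map_subst_glue (h : Linear (p :: ps)) (a b : V → Tm Op Con V) :
    (p :: ps).map (Tm.subst fun x => if VarIn x p then a x else b x) =
      Tm.subst a p :: ps.map (Tm.subst b) := by
  rw [List.map_cons, Tm.subst_congr p fun x hx => if_pos hx]
  congr 1
  exact List.map_congr_left fun u hu =>
    Tm.subst_congr u fun x hx => if_neg fun hxp => h.not_varIn_of_mem hxp hu hx

end Linear

theorem PMatch.exists_forall₂_of_con {h : Heap Con} {σ : V → Loc} {c : Con}
    {ps : List (Tm Op Con V)} {l : Loc} (hm : PMatch h σ (.con c ps) l) :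
    ∃ ls, h l = some (c, ls) ∧ List.Forall₂ (PMatch h σ) ps ls := by
  cases hm with
  | con hl hlen hargs => exact ⟨_, hl, List.forall₂_of_length_eq_of_getElem? hlen hargs⟩

theorem PMatch.eq_of_varIn {h : Heap Con} {σ τ : V → Loc} {p : Tm Op Con V} {l : Loc} {x : V}
    (hσ : PMatch h σ p l) (hτ : PMatch h τ p l) (hx : VarIn x p) : σ x = τ x := by
  induction hσ with
  | var hl => cases hx; cases hτ with | var hl' => exact hl.trans hl'.symm
  | @con c ps l ls hl hlen _ ih =>
    obtain ⟨ls', hl', hargs⟩ := hτ.exists_forall₂_of_con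
    obtain rfl : ls = ls' := by simpa [hl] using hl'
    cases hx with
    | con hmem hxt =>
      obtain ⟨i, hi, rfl⟩ := List.getElem_of_mem hmem
      exact ih i _ _ (by simp) (by simp) (hargs.get hi (by omega)) hxt

/-- Syntactic unification along the common match: a variable on either side is bound to the
other side's term, equal constructors are unified argumentwise, and linearity lets the
substitutions found for different arguments be glued. -/
theorem Linear.exists_map_subst_eq [DecidableEq V] {h : Heap Con} {σ τ : V → Loc} :
    ∀ {ps qs : List (Tm Op Con V)} {ls : List Loc}, Linear ps → Linear qs →
      List.Forall₂ (PMatch h σ) ps ls → List.Forall₂ (PMatch h τ) qs ls →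
      ∃ s₁ s₂ : V → Tm Op Con V, ps.map (Tm.subst s₁) = qs.map (Tm.subst s₂)
  | _, _, _, _, _, .nil, .nil => ⟨Tm.var, Tm.var, rfl⟩
  | p :: ps, q :: qs, _ :: _, hlp, hlq, .cons hp hps, .cons hq hqs => by
    obtain ⟨b₁, b₂, hb⟩ := Linear.exists_map_subst_eq hlp.tail hlq.tail hps hqs
    obtain ⟨a₁, a₂, ha⟩ : ∃ a₁ a₂ : V → Tm Op Con V, p.subst a₁ = q.subst a₂ := by
      match p, q, hp, hq, hlp, hlq with
      | .var _, q, _, _, _, _ => exact ⟨fun _ => q.subst Tm.var, Tm.var, by simp⟩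
      | .con c pargs, .var _, _, _, _, _ =>
        exact ⟨Tm.var, fun _ => (Tm.con c pargs).subst Tm.var, by simp⟩
      | .con c pargs, .con d qargs, hp, hq, hlp, hlq =>
        obtain ⟨ls, hl, hpargs⟩ := hp.exists_forall₂_of_con
        obtain ⟨ls', hl', hqargs⟩ := hq.exists_forall₂_of_con
        obtain ⟨rfl, rfl⟩ : c = d ∧ ls = ls' := by simpa [hl] using hl'
        obtain ⟨s₁, s₂, hs⟩ := Linear.exists_map_subst_eq hlp.of_con hlq.of_con hpargs hqargs
        exact ⟨s₁, s₂, by simp [hs]⟩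
      | .op _ _, _, hp, _, _, _ => cases hp
      | .con _ _, .op _ _, _, hq, _, _ => cases hq
    exact ⟨_, _, (hlp.map_subst_glue a₁ b₁).trans <|
      (congrArg₂ _ ha hb).trans (hlq.map_subst_glue a₂ b₂).symm⟩

/-- Two rules matching the same arguments overlap, hence coincide by non-ambiguity; their
matches then agree on every variable of the right-hand side, which all occur on the left. -/
theorem Orthogonal.instE_rhs_eq [DecidableEq V] {P : Prog Op Con V} (hP : Orthogonal P)
    {h : Heap Con} {ls : List Loc} {r₁ r₂ : Rule Op Con V} {σ₁ σ₂ : V → Loc}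
    (hr₁ : r₁ ∈ P.rules) (hr₂ : r₂ ∈ P.rules) (hf : r₁.lhsOp = r₂.lhsOp)
    (hm₁ : List.Forall₂ (PMatch h σ₁) r₁.lhsArgs ls)
    (hm₂ : List.Forall₂ (PMatch h σ₂) r₂.lhsArgs ls) :
    instE σ₁ r₁.rhs = instE σ₂ r₂.rhs := by
  obtain ⟨hrules, hna⟩ := hP
  obtain ⟨s₁, s₂, hs⟩ :=
    Linear.exists_map_subst_eq (hrules r₁ hr₁).2 (hrules r₂ hr₂).2 hm₁ hm₂
  obtain rfl := hna r₁ hr₁ r₂ hr₂ hf s₁ s₂ hs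
  refine instE_congr _ fun x hx => ?_
  obtain ⟨p, hp, hxp⟩ := (hrules r₁ hr₁).1.2 x hx
  obtain ⟨l, hpσ₁, hpσ₂⟩ := hm₁.exists_of_mem_left hm₂ hp
  exact hpσ₁.eq_of_varIn hpσ₂ hxp

@[simp] theorem Expr.map_loc_inj {ls ks : List Loc} :
    (ls.map .loc : List (Expr Op Con)) = ks.map .loc ↔ ls = ks :=
  List.map_inj_right fun _ _ => Expr.loc.inj

inductive IsRedex : Expr Op Con → Prop
  | op (f : Op) (ls : List Loc) : IsRedex (.op f (ls.map .loc))
  | con (c : Con) (ls : List Loc) : IsRedex (.con c (ls.map .loc))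
  | marked (f : Op) (ls : List Loc) (l : Loc) : IsRedex (.marked f ls (.loc l))

theorem IsRedex.plug_ne_loc {a : Expr Op Con} (ha : IsRedex a) (E : Ctx Op Con) (l : Loc) :
    E.plug a ≠ .loc l := by
  cases E <;> cases ha <;> simp [Ctx.plug]

theorem IsRedex.plug_notMem_map_loc {a : Expr Op Con} (ha : IsRedex a) (E : Ctx Op Con)
    (ls : List Loc) : E.plug a ∉ ls.map .loc := by
  simpa using fun l _ => (ha.plug_ne_loc E l).symm

theorem IsRedex.eq_hole {E : Ctx Op Con} {b : Expr Op Con} (hE : IsRedex (E.plug b))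
    (hb : IsRedex b) : E = .hole := by
  generalize he : E.plug b = e at hE
  cases hE <;> cases E <;> simp only [Ctx.plug, Expr.op.injEq, Expr.con.injEq,
    Expr.marked.injEq, reduceCtorEq] at he ⊢
  · exact hb.plug_notMem_map_loc _ _ (he.2 ▸ List.mem_append_right _ List.mem_cons_self)
  · exact hb.plug_notMem_map_loc _ _ (he.2 ▸ List.mem_append_right _ List.mem_cons_self)
  · exact hb.plug_ne_loc _ _ he.2.2

theorem Ctx.plug_inj {E₁ E₂ : Ctx Op Con} {a b : Expr Op Con} (ha : IsRedex a) (hb : IsRedex b)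
    (h : E₁.plug a = E₂.plug b) : E₁ = E₂ ∧ a = b := by
  induction E₁ generalizing E₂ with
  | hole => obtain rfl := (h ▸ ha : IsRedex (E₂.plug b)).eq_hole hb; exact ⟨rfl, h⟩
  | marked f ls E ih =>
    cases E₂ with
    | hole => cases (show IsRedex ((Ctx.marked f ls E).plug a) from h ▸ hb).eq_hole ha
    | marked f' ls' E' =>
      simp only [Ctx.plug, Expr.marked.injEq] at h
      obtain ⟨rfl, rfl, hE⟩ := h
      exact (ih hE).imp_left (congrArg _)
    | _ => simp [Ctx.plug] at h
  | op f ls E es ih =>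
    cases E₂ with
    | hole => cases (show IsRedex ((Ctx.op f ls E es).plug a) from h ▸ hb).eq_hole ha
    | op f' ls' E' es' =>
      simp only [Ctx.plug, Expr.op.injEq] at h
      obtain ⟨rfl, hargs⟩ := h
      obtain ⟨hls, hE, rfl⟩ := List.eq_of_append_cons_eq_append_cons
        (ha.plug_notMem_map_loc _ _) (hb.plug_notMem_map_loc _ _) hargs
      obtain rfl := Expr.map_loc_inj.1 hls
      exact (ih hE).imp_left (congrArg (Ctx.op f ls · es))
    | _ => simp [Ctx.plug] at h
  | con c ls E es ih =>
    cases E₂ with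
    | hole => cases (show IsRedex ((Ctx.con c ls E es).plug a) from h ▸ hb).eq_hole ha
    | con c' ls' E' es' =>
      simp only [Ctx.plug, Expr.con.injEq] at h
      obtain ⟨rfl, hargs⟩ := h
      obtain ⟨hls, hE, rfl⟩ := List.eq_of_append_cons_eq_append_cons
        (ha.plug_notMem_map_loc _ _) (hb.plug_notMem_map_loc _ _) hargs
      obtain rfl := Expr.map_loc_inj.1 hls
      exact (ih hE).imp_left (congrArg (Ctx.con c ls · es))
    | _ => simp [Ctx.plug] at h

theorem Merge.deterministic {h h₁ h₂ : Heap Con} {c : Con} {ls : List Loc} {l₁ l₂ : Loc}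
    (hms : MaxShared h) (m₁ : Merge h c ls h₁ l₁) (m₂ : Merge h c ls h₂ l₂) :
    h₁ = h₂ ∧ l₁ = l₂ := by
  cases m₁ with
  | reuse hl₁ =>
    cases m₂ with
    | reuse hl₂ => exact ⟨rfl, hms _ _ _ _ hl₁ hl₂⟩
    | fresh hnew _ _ => exact absurd hl₁ (hnew l₁)
  | fresh hnew hl₁ hmin₁ =>
    cases m₂ with
    | reuse hl₂ => exact absurd hl₂ (hnew l₂)
    | fresh _ hl₂ hmin₂ =>
      obtain rfl : l₁ = l₂ := le_antisymm (not_lt.1 fun hlt => hmin₁ l₂ hlt hl₂)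
        (not_lt.1 fun hlt => hmin₂ l₁ hlt hl₁)
      exact ⟨rfl, rfl⟩

inductive HeadStep (P : Prog Op Con V) : Config Op Con → Config Op Con → Prop
  | apply {C : HCache Op} {h : Heap Con} {f ls r σ} : (∀ l, (f, ls, l) ∉ C) →
      r ∈ P.rules → r.lhsOp = f → List.Forall₂ (PMatch h σ) r.lhsArgs ls →
      HeadStep P (C, h, .op f (ls.map .loc)) (C, h, .marked f ls (instE σ r.rhs))
  | read {C : HCache Op} {h : Heap Con} {f ls l} : (f, ls, l) ∈ C →
      HeadStep P (C, h, .op f (ls.map .loc)) (C, h, .loc l)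
  | store {C : HCache Op} {h : Heap Con} {f ls l} :
      HeadStep P (C, h, .marked f ls (.loc l)) (insert (f, ls, l) C, h, .loc l)
  | merge {C : HCache Op} {h h' : Heap Con} {c ls l} : Merge h c ls h' l →
      HeadStep P (C, h, .con c (ls.map .loc)) (C, h', .loc l)

theorem HeadStep.isRedex {P : Prog Op Con V} {C : HCache Op} {h : Heap Con} {a : Expr Op Con}
    {c' : Config Op Con} (hs : HeadStep P (C, h, a) c') : IsRedex a := by
  cases hs <;> constructor

theorem Step.exists_headStep {P : Prog Op Con V} {C : HCache Op} {h : Heap Con}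
    {e : Expr Op Con} {c' : Config Op Con} (hs : Step P (C, h, e) c') :
    ∃ (E : Ctx Op Con) (a : Expr Op Con) (C' : HCache Op) (h' : Heap Con) (a' : Expr Op Con),
      HeadStep P (C, h, a) (C', h', a') ∧ e = E.plug a ∧ c' = (C', h', E.plug a') := by
  unfold Step SmStep at hs
  rcases hs with hs | hs | hs | hs
  · cases hs with
    | mk hnew hr hf hlen hm =>
      exact ⟨_, _, _, _, _,
        .apply hnew hr hf (List.forall₂_of_length_eq_of_getElem? hlen hm), rfl, rfl⟩
  · cases hs with | mk hc => exact ⟨_, _, _, _, _, .read hc, rfl, rfl⟩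
  · cases hs with | mk => exact ⟨_, _, _, _, _, .store, rfl, rfl⟩
  · cases hs with | mk hm => exact ⟨_, _, _, _, _, .merge hm, rfl, rfl⟩

theorem HeadStep.deterministic [DecidableEq V] {P : Prog Op Con V} (hP : Orthogonal P)
    {C : HCache Op} {h : Heap Con} {a : Expr Op Con} {c₁ c₂ : Config Op Con}
    (hC : ∀ f ls l₁ l₂, (f, ls, l₁) ∈ C → (f, ls, l₂) ∈ C → l₁ = l₂) (hms : MaxShared h)
    (hs₁ : HeadStep P (C, h, a) c₁) (hs₂ : HeadStep P (C, h, a) c₂) : c₁ = c₂ := by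
  generalize hx : (C, h, a) = x at hs₂
  cases hs₁ with
  | apply hnew₁ hr₁ hf₁ hm₁ =>
    cases hs₂ with
    | apply _ hr₂ hf₂ hm₂ =>
      simp only [Prod.mk.injEq, Expr.op.injEq, Expr.map_loc_inj] at hx
      obtain ⟨rfl, rfl, rfl, rfl⟩ := hx
      rw [hP.instE_rhs_eq hr₁ hr₂ (hf₁.trans hf₂.symm) hm₁ hm₂]
    | read hc₂ =>
      simp only [Prod.mk.injEq, Expr.op.injEq, Expr.map_loc_inj] at hx
      obtain ⟨rfl, rfl, rfl, rfl⟩ := hx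
      exact absurd hc₂ (hnew₁ _)
    | _ => simp at hx
  | read hc₁ =>
    cases hs₂ with
    | apply hnew₂ =>
      simp only [Prod.mk.injEq, Expr.op.injEq, Expr.map_loc_inj] at hx
      obtain ⟨rfl, rfl, rfl, rfl⟩ := hx
      exact absurd hc₁ (hnew₂ _)
    | read hc₂ =>
      simp only [Prod.mk.injEq, Expr.op.injEq, Expr.map_loc_inj] at hx
      obtain ⟨rfl, rfl, rfl, rfl⟩ := hx
      rw [hC _ _ _ _ hc₁ hc₂]
    | _ => simp at hx
  | store =>
    cases hs₂ with
    | store =>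
      simp only [Prod.mk.injEq, Expr.marked.injEq, Expr.loc.injEq] at hx
      obtain ⟨rfl, rfl, rfl, rfl, rfl⟩ := hx
      rfl
    | _ => simp at hx
  | merge hm₁ =>
    cases hs₂ with
    | merge hm₂ =>
      simp only [Prod.mk.injEq, Expr.con.injEq, Expr.map_loc_inj] at hx
      obtain ⟨rfl, rfl, rfl, rfl⟩ := hx
      obtain ⟨rfl, rfl⟩ := hm₁.deterministic hms hm₂
      rfl
    | _ => simp at hx

/-- Lemma 11.(2).  The combined small-step relation
`⇒ = ⇀ ∪ →read ∪ →store ∪ →merge` is deterministic on well-formed configurations. -/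
theorem statement10 {Op Con V : Type} [DecidableEq V] (P : Prog Op Con V)
    (hP : Orthogonal P) (c c1 c2 : Config Op Con) (hwf : WF c)
    (h1 : Step P c c1) (h2 : Step P c c2) :
    c1 = c2 := by
  obtain ⟨C, h, e⟩ := c
  obtain ⟨E₁, a₁, C₁, h₁, a₁', hs₁, rfl, rfl⟩ := h1.exists_headStep
  obtain ⟨E₂, a₂, C₂, h₂, a₂', hs₂, he, rfl⟩ := h2.exists_headStep
  obtain ⟨rfl, rfl⟩ := Ctx.plug_inj hs₁.isRedex hs₂.isRedex he
  cases hs₁.deterministic hP hwf.2.2.1 hwf.1 hs₂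
  rfl

end Memo
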